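/- Let r > 0 and let G be a P5-free graph with nonempty disjoint subsets A, B_1, …, B_k ⊆ V(G) such that: (1) B_1, …, B_k are pairwise anticomplete and each G[B_i] is anticonnected; (2) no vertex of A is mixed on two of B_1, …, B_k; and (3) χ(A \ N_G(v)) ≤ r for all v ∈ B_1 ∪ ⋯ ∪ B_k. Then either (a) there are at least k − k^{1/2} indices i ∈ [k] for which some A_i' ⊆ A complete to B_i satisfies χ(A_i') ≥ (1 − 1/k)·χ(A) − k·r, or (b) G[A] contains a complete blockade (D_1, …, D_q) with q ≥ k^{1/2} and χ(D_j) ≥ χ(A)/k for all j ∈ [q]. -/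

import Mathlib

/-!
Call `i` good if some subset of `A` complete to `B i` has chromatic number at least
`(1 - 1/k) χ(A) - k r`. If fewer than `k - √k` indices are good, the set `J` of bad indices has
at least `√k` elements. Fix `v j ∈ B j`, and for `i ∈ J` let `D i = mixedPart G A B J i` be the
set of vertices of `A` that are mixed on `B i` and complete to every other `B j` with `j ∈ J`.
A vertex of `A` that is not mixed on `B j` is complete or anticomplete to it, so every vertex of
`A` is complete to `B i`, lies in `D i`, or is nonadjacent to some `v j`. Hence
`χ(A) ≤ χ(complete part) + χ(D i) + k r`, and badness of `i` forces `χ(D i) ≥ χ(A) / k`.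

The `D i` are disjoint because no vertex is mixed on two blocks. They are pairwise complete: if
`a ∈ D i` and `b ∈ D j` were nonadjacent, take `q ∈ B i` nonadjacent to `a` and (by
anticonnectivity of `B j`) nonadjacent `p, p' ∈ B j` with `b` adjacent to `p` but not to `p'`;
then `q - b - p - a - p'` is an induced `P5`.
-/

open SimpleGraph

/-- The chromatic number of the subgraph of `G` induced on `S`, as a natural number. -/
noncomputable def chiS {V : Type*} [Fintype V] (G : SimpleGraph V) (S : Set V) : ℕ :=
  (G.induce S).chromaticNumber.toNat

/-- A graph is `P5`-free if it has no induced subgraph isomorphic to the five-vertex path. -/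
def P5Free {V : Type*} (G : SimpleGraph V) : Prop :=
  IsEmpty (SimpleGraph.pathGraph 5 ↪g G)

/-- `v` is mixed on `S`: it has both a neighbour and a nonneighbour in `S`. -/
def MixedOn {V : Type*} (G : SimpleGraph V) (v : V) (S : Set V) : Prop :=
  (∃ s ∈ S, G.Adj v s) ∧ (∃ s ∈ S, ¬ G.Adj v s)

section ChromaticNumberOfSubsets

variable {V : Type*} [Fintype V] (G : SimpleGraph V)

lemma colorable_chiS (S : Set V) : (G.induce S).Colorable (chiS G S) :=
  colorable_chromaticNumber_of_fintype _

lemma chiS_le_of_colorable {S : Set V} {n : ℕ} (h : (G.induce S).Colorable n) : chiS G S ≤ n :=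
  ENat.toNat_le_of_le_natCast h.chromaticNumber_le

lemma chiS_mono {S T : Set V} (h : S ⊆ T) : chiS G S ≤ chiS G T :=
  chiS_le_of_colorable G ((colorable_chiS G T).of_hom (G.induceHomOfLE h).toHom)

lemma chiS_union_le (S T : Set V) : chiS G (S ∪ T) ≤ chiS G S + chiS G T := by
  classical
  obtain ⟨cS⟩ := colorable_chiS G S
  obtain ⟨cT⟩ := colorable_chiS G T
  let c : (G.induce (S ∪ T)).Coloring (Fin (chiS G S) ⊕ Fin (chiS G T)) :=
    Coloring.mk
      (fun x => if h : (x : V) ∈ S then .inl (cS ⟨x, h⟩) else .inr (cT ⟨x, x.2.resolve_left h⟩))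
      (fun {u v} huv => by
        split_ifs with hu hv hv
        · exact fun h => cS.valid (v := ⟨u, hu⟩) (w := ⟨v, hv⟩) huv (Sum.inl_injective h)
        · simp
        · simp
        · exact fun h => cT.valid (v := ⟨u, u.2.resolve_left hu⟩) (w := ⟨v, v.2.resolve_left hv⟩)
            huv (Sum.inr_injective h))
  simpa using chiS_le_of_colorable G c.colorable

lemma chiS_biUnion_le {ι : Type*} (s : Finset ι) (f : ι → Set V) :
    chiS G (⋃ i ∈ s, f i) ≤ ∑ i ∈ s, chiS G (f i) := by
  classical
  induction s using Finset.induction_on with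
  | empty => simpa using chiS_le_of_colorable G (Colorable.of_isEmpty 0)
  | insert a s has ih =>
    rw [Finset.set_biUnion_insert, Finset.sum_insert has]
    exact (chiS_union_le G _ _).trans (Nat.add_le_add_left ih _)

lemma chiS_iUnion_le {ι : Type*} [Fintype ι] (f : ι → Set V) :
    chiS G (⋃ i, f i) ≤ ∑ i, chiS G (f i) := by
  simpa using chiS_biUnion_le G Finset.univ f

end ChromaticNumberOfSubsets

lemma P5Free.false_of_adj_iff {V : Type*} {G : SimpleGraph V} (hG : P5Free G) {v : Fin 5 → V}
    (hv : ∀ i j, G.Adj (v i) (v j) ↔ (pathGraph 5).Adj i j) : False := by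
  have twin_free :
      ∀ i j : Fin 5, (∀ c, (pathGraph 5).Adj c i ↔ (pathGraph 5).Adj c j) → i = j := by
    simp only [pathGraph_adj]
    decide
  exact hG.false ⟨⟨v, fun i j h => twin_free i j fun c => by rw [← hv, ← hv, h]⟩, hv _ _⟩

lemma P5Free.false_of_induced_path {V : Type*} {G : SimpleGraph V} (hG : P5Free G)
    {v₀ v₁ v₂ v₃ v₄ : V}
    (h01 : G.Adj v₀ v₁) (h12 : G.Adj v₁ v₂) (h23 : G.Adj v₂ v₃) (h34 : G.Adj v₃ v₄)
    (h02 : ¬ G.Adj v₀ v₂) (h03 : ¬ G.Adj v₀ v₃) (h04 : ¬ G.Adj v₀ v₄)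
    (h13 : ¬ G.Adj v₁ v₃) (h14 : ¬ G.Adj v₁ v₄) (h24 : ¬ G.Adj v₂ v₄) : False :=
  hG.false_of_adj_iff (v := ![v₀, v₁, v₂, v₃, v₄]) fun i j => by
    fin_cases i <;> fin_cases j <;> simp [pathGraph_adj, G.adj_comm, *]

lemma MixedOn.exists_nonadj_pair {V : Type*} {G : SimpleGraph V} {v : V} {B : Set V}
    (hv : MixedOn G v B) (hB : (G.induce B)ᶜ.Connected) :
    ∃ p ∈ B, ∃ q ∈ B, ¬ G.Adj p q ∧ G.Adj v p ∧ ¬ G.Adj v q := by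
  obtain ⟨⟨s, hs, hvs⟩, t, ht, hvt⟩ := hv
  obtain ⟨d, -, hp, hq⟩ := (hB.preconnected ⟨s, hs⟩ ⟨t, ht⟩).some.exists_boundary_dart
    {x | G.Adj v x} hvs hvt
  exact ⟨d.fst, d.fst.2, d.snd, d.snd.2, ((compl_adj _ _ _).1 d.adj).2, hp, hq⟩

lemma not_adj_of_not_mixedOn {V : Type*} {G : SimpleGraph V} {a b : V} {S : Set V}
    (h : ¬ MixedOn G a S) (hb : b ∈ S) (hab : ¬ G.Adj a b) : ∀ s ∈ S, ¬ G.Adj a s :=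
  fun s hs has => h ⟨⟨s, hs, has⟩, b, hb, hab⟩

def mixedPart {V ι : Type*} (G : SimpleGraph V) (A : Set V) (B : ι → Set V) (J : Finset ι)
    (i : ι) : Set V :=
  {a ∈ A | MixedOn G a (B i) ∧ ∀ j ∈ J, j ≠ i → ∀ b ∈ B j, G.Adj a b}

section MixedPart

variable {V ι : Type*} {G : SimpleGraph V} {A : Set V} {B : ι → Set V}

lemma disjoint_mixedPart
    (hmix : ∀ a ∈ A, ∀ i j, i ≠ j → ¬ (MixedOn G a (B i) ∧ MixedOn G a (B j)))
    (J : Finset ι) {i j : ι} (hij : i ≠ j) :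
    Disjoint (mixedPart G A B J i) (mixedPart G A B J j) :=
  Set.disjoint_left.2 fun a ha ha' => hmix a ha.1 i j hij ⟨ha.2.1, ha'.2.1⟩

lemma adj_of_mem_mixedPart (hP5 : P5Free G) {J : Finset ι} {i j : ι} (hi : i ∈ J) (hj : j ∈ J)
    (hij : i ≠ j) (hBij : ∀ x ∈ B i, ∀ y ∈ B j, ¬ G.Adj x y) (hBj : (G.induce (B j))ᶜ.Connected)
    {a b : V} (ha : a ∈ mixedPart G A B J i) (hb : b ∈ mixedPart G A B J j) : G.Adj a b := by
  by_contra hab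
  obtain ⟨-, ⟨-, q, hq, haq⟩, ha_j⟩ := ha
  obtain ⟨-, hb_mixed, hb_i⟩ := hb
  obtain ⟨p, hp, p', hp', hpp', hbp, hbp'⟩ := hb_mixed.exists_nonadj_pair hBj
  have ha_j := ha_j j hj hij.symm
  have hb_i := hb_i i hi hij
  exact hP5.false_of_induced_path (hb_i q hq).symm hbp (ha_j p hp).symm (ha_j p' hp')
    (hBij q hq p hp) (fun h => haq h.symm) (hBij q hq p' hp') (fun h => hab h.symm) hbp' hpp'

lemma subset_union_mixedPart
    (hmix : ∀ a ∈ A, ∀ i j, i ≠ j → ¬ (MixedOn G a (B i) ∧ MixedOn G a (B j)))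
    {v : ι → V} (hv : ∀ j, v j ∈ B j) (J : Finset ι) (i : ι) :
    A ⊆ {a ∈ A | ∀ b ∈ B i, G.Adj a b} ∪ mixedPart G A B J i ∪ ⋃ j, A \ G.neighborSet (v j) := by
  intro a ha
  by_cases hcomplete : ∀ b ∈ B i, G.Adj a b
  · exact .inl (.inl ⟨ha, hcomplete⟩)
  push Not at hcomplete
  obtain ⟨b, hb, hab⟩ := hcomplete
  by_cases hmixed : MixedOn G a (B i)
  · by_cases hrest : ∀ j ∈ J, j ≠ i → ∀ b ∈ B j, G.Adj a b
    · exact .inl (.inr ⟨ha, hmixed, hrest⟩)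
    push Not at hrest
    obtain ⟨j, -, hji, b', hb', hab'⟩ := hrest
    have hanti := not_adj_of_not_mixedOn (fun h => hmix a ha i j hji.symm ⟨hmixed, h⟩) hb' hab'
    exact .inr (Set.mem_iUnion.2 ⟨j, ha, fun h => hanti _ (hv j) h.symm⟩)
  · exact .inr (Set.mem_iUnion.2
      ⟨i, ha, fun h => not_adj_of_not_mixedOn hmixed hb hab _ (hv i) h.symm⟩)

lemma le_chiS_complete_or_le_chiS_mixedPart [Fintype V] [Fintype ι]
    (hmix : ∀ a ∈ A, ∀ i j, i ≠ j → ¬ (MixedOn G a (B i) ∧ MixedOn G a (B j)))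
    (hB : ∀ j, (B j).Nonempty) {r : ℝ}
    (hcov : ∀ j, ∀ v ∈ B j, (chiS G (A \ G.neighborSet v) : ℝ) ≤ r) (J : Finset ι) (i : ι) :
    (1 - 1 / Fintype.card ι : ℝ) * chiS G A - Fintype.card ι * r ≤
        chiS G {a ∈ A | ∀ b ∈ B i, G.Adj a b} ∨
      (chiS G A : ℝ) / Fintype.card ι ≤ chiS G (mixedPart G A B J i) := by
  choose v hv using hB
  have hcover : chiS G A ≤ chiS G {a ∈ A | ∀ b ∈ B i, G.Adj a b} +
      chiS G (mixedPart G A B J i) + ∑ j, chiS G (A \ G.neighborSet (v j)) :=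
    (chiS_mono G (subset_union_mixedPart hmix hv J i)).trans <| (chiS_union_le G _ _).trans <|
      add_le_add (chiS_union_le G _ _) (chiS_iUnion_le G _)
  have hsum : (∑ j, chiS G (A \ G.neighborSet (v j)) : ℝ) ≤ Fintype.card ι * r := by
    have := Finset.sum_le_card_nsmul Finset.univ _ r fun j _ => hcov j (v j) (hv j)
    rwa [Finset.card_univ, nsmul_eq_mul] at this
  have hsplit : (1 - 1 / Fintype.card ι : ℝ) * chiS G A =
      chiS G A - (chiS G A : ℝ) / Fintype.card ι := by ring
  by_contra! h
  have : (chiS G A : ℝ) ≤ chiS G {a ∈ A | ∀ b ∈ B i, G.Adj a b} +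
      chiS G (mixedPart G A B J i) + ∑ j, (chiS G (A \ G.neighborSet (v j)) : ℝ) := by
    exact_mod_cast hcover
  linarith [h.1, h.2]

end MixedPart

theorem stmt_9_general {V : Type*} [Fintype V] (G : SimpleGraph V) (hP5 : P5Free G)
    (r : ℝ) (k : ℕ)
    (A : Set V) (Bf : Fin k → Set V)
    (hBne : ∀ i, (Bf i).Nonempty)
    (hanti : ∀ i j, i ≠ j → ∀ a ∈ Bf i, ∀ b ∈ Bf j, ¬ G.Adj a b)
    (hanticonn : ∀ i, ((G.induce (Bf i))ᶜ).Connected)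
    (hmix : ∀ a ∈ A, ∀ i j, i ≠ j → ¬ (MixedOn G a (Bf i) ∧ MixedOn G a (Bf j)))
    (hcov : ∀ i, ∀ v ∈ Bf i, (chiS G (A \ G.neighborSet v) : ℝ) ≤ r) :
    (∃ I : Finset (Fin k), (k : ℝ) - Real.sqrt k ≤ (I.card : ℝ) ∧
      ∀ i ∈ I, ∃ A' ⊆ A, (∀ a ∈ A', ∀ b ∈ Bf i, G.Adj a b) ∧
        (1 - 1 / (k : ℝ)) * (chiS G A : ℝ) - k * r ≤ (chiS G A' : ℝ)) ∨
    (∃ (q : ℕ) (D : Fin q → Set V), Real.sqrt k ≤ (q : ℝ) ∧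
      (∀ j, D j ⊆ A) ∧
      (∀ i j, i ≠ j → Disjoint (D i) (D j)) ∧
      (∀ i j, i ≠ j → ∀ a ∈ D i, ∀ b ∈ D j, G.Adj a b) ∧
      ∀ j, (chiS G A : ℝ) / k ≤ (chiS G (D j) : ℝ)) := by
  classical
  set good : Fin k → Prop := fun i => ∃ A' ⊆ A, (∀ a ∈ A', ∀ b ∈ Bf i, G.Adj a b) ∧
    (1 - 1 / (k : ℝ)) * (chiS G A : ℝ) - k * r ≤ (chiS G A' : ℝ)
  by_cases hgood : (k : ℝ) - Real.sqrt k ≤ (Finset.univ.filter good).card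
  · exact .inl ⟨_, hgood, fun i hi => (Finset.mem_filter.1 hi).2⟩
  set bad := Finset.univ.filter (¬ good ·)
  have hbad : Real.sqrt k ≤ bad.card := by
    have := Finset.card_filter_add_card_filter_not (s := Finset.univ) good
    rw [Finset.card_univ, Fintype.card_fin] at this
    have hsum : ((Finset.univ.filter good).card + bad.card : ℝ) = k := by exact_mod_cast this
    linarith [not_le.1 hgood]
  let e := bad.equivFin.symm
  have he {m m' : Fin bad.card} (h : m ≠ m') : (e m : Fin k) ≠ e m' :=
    Subtype.val_injective.ne (e.injective.ne h)
  refine .inr ⟨bad.card, fun m => mixedPart G A Bf bad (e m), hbad, fun m => Set.sep_subset _ _,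
    fun m m' h => disjoint_mixedPart hmix bad (he h),
    fun m m' h a ha b hb => adj_of_mem_mixedPart hP5 (e m).2 (e m').2 (he h)
      (hanti _ _ (he h)) (hanticonn _) ha hb, fun m => ?_⟩
  have hm := (Finset.mem_filter.1 (e m).2).2
  simpa using (le_chiS_complete_or_le_chiS_mixedPart hmix hBne hcov bad (e m)).resolve_left
    fun h => hm ⟨_, Set.sep_subset _ _, fun a ha => ha.2, by simpa using h⟩

theorem stmt_9 {V : Type*} [Fintype V] (G : SimpleGraph V) (hP5 : P5Free G)
    (r : ℝ) (hr : 0 < r) (k : ℕ) (hk : 1 ≤ k)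
    (A : Set V) (Bf : Fin k → Set V)
    (hAne : A.Nonempty) (hBne : ∀ i, (Bf i).Nonempty)
    (hdAB : ∀ i, Disjoint A (Bf i))
    (hdBB : ∀ i j, i ≠ j → Disjoint (Bf i) (Bf j))
    (hanti : ∀ i j, i ≠ j → ∀ a ∈ Bf i, ∀ b ∈ Bf j, ¬ G.Adj a b)
    (hanticonn : ∀ i, ((G.induce (Bf i))ᶜ).Connected)
    (hmix : ∀ a ∈ A, ∀ i j, i ≠ j → ¬ (MixedOn G a (Bf i) ∧ MixedOn G a (Bf j)))
    (hcov : ∀ i, ∀ v ∈ Bf i, (chiS G (A \ G.neighborSet v) : ℝ) ≤ r) :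
    (∃ I : Finset (Fin k), (k : ℝ) - Real.sqrt k ≤ (I.card : ℝ) ∧
      ∀ i ∈ I, ∃ A' ⊆ A, (∀ a ∈ A', ∀ b ∈ Bf i, G.Adj a b) ∧
        (1 - 1 / (k : ℝ)) * (chiS G A : ℝ) - k * r ≤ (chiS G A' : ℝ)) ∨
    (∃ (q : ℕ) (D : Fin q → Set V), Real.sqrt k ≤ (q : ℝ) ∧
      (∀ j, D j ⊆ A) ∧
      (∀ i j, i ≠ j → Disjoint (D i) (D j)) ∧
      (∀ i j, i ≠ j → ∀ a ∈ D i, ∀ b ∈ D j, G.Adj a b) ∧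
      ∀ j, (chiS G A : ℝ) / k ≤ (chiS G (D j) : ℝ)) :=
  stmt_9_general G hP5 r k A Bf hBne hanti hanticonn hmix hcov
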